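/- Let G' = (P ∪ B, E) be a finite galactic graph with a black hole b ∈ B, and let S, T ⊆ P with |S| = |T| = n and no black hole in N[S ∪ T]. If there is a plan for Galactic 1IUMAPF from S to T in G', then there is a plan Q'_0, …, Q'_{ℓ'} for Galactic 1IUMAPF from S to T in G' such that no two consecutive configurations both have an agent in the open neighborhood N(b); that is, for every t ∈ [0, ℓ'−1], the set of vertices occupied by Q'_t is disjoint from N(b) or the set occupied by Q'_{t+1} is disjoint from N(b). -/

import Mathlib

/-!
Every move `u → x` of a plan is replaced by six moves whose odd-numbered configurations avoid
`N(b)`. Agents with source and target both in `N(b)` wait in `b` meanwhile. Of the others, those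
starting in `N(b)` step into `b` and back; then a set `D` of agents, closed under "waits for",
moves to its targets; then the remaining agents move; finally those with targets in `N(b)` step
into `b` and back out. A valid `D` exists unless some agent leaving `N(b)` waits, through a chain,
on an agent entering `N(b)`. Since agents are unlabelled, the targets may be permuted: rotating
them along a shortest such chain lets its first agent take the last agent's target through `b`,
and strictly decreases the number of agents that enter or leave `N(b)`.
-/

open SimpleGraph

/-- A configuration of `n` agents is distance-`r` independent if distinct agents are
at graph distance at least `r + 1`. A plan for `rIUMAPF` of length `ℓ` from `S` to `T`:
the occupied sets at times `0` and `ℓ` are `S` and `T`, every configuration up to time `ℓ`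
is distance-`r` independent, and each agent moves within closed neighborhoods. -/
def IsPlan {V : Type*} (G : SimpleGraph V) (r n ℓ : ℕ) (Q : ℕ → Fin n → V)
    (S T : Set V) : Prop :=
  Set.range (Q 0) = S ∧ Set.range (Q ℓ) = T ∧
  (∀ k ≤ ℓ, ∀ i j : Fin n, i ≠ j → r + 1 ≤ G.dist (Q k i) (Q k j)) ∧
  (∀ k < ℓ, ∀ i : Fin n, Q (k + 1) i = Q k i ∨ G.Adj (Q k i) (Q (k + 1) i))

/-- Galactic distance-`r` independence: no two distinct agents on planets are within
distance `r` in the planet-induced subgraph (`edist = ⊤` when unreachable). -/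
def GalIndep {V : Type*} (G : SimpleGraph V) (P : Set V) (r : ℕ) {n : ℕ}
    (Q : Fin n → V) : Prop :=
  ∀ i j : Fin n, i ≠ j → ∀ (hi : Q i ∈ P) (hj : Q j ∈ P),
    (r : ℕ∞) < (G.induce P).edist ⟨Q i, hi⟩ ⟨Q j, hj⟩

/-- A plan for Galactic `rIUMAPF` from `S` to `T`. -/
def GalPlan {V : Type*} (G : SimpleGraph V) (P : Set V) (r n : ℕ)
    (S T : Set V) : Prop :=
  ∃ (ℓ : ℕ) (Q : ℕ → Fin n → V),
    Set.range (Q 0) = S ∧ Set.range (Q ℓ) = T ∧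
    (∀ k ≤ ℓ, GalIndep G P r (Q k)) ∧
    (∀ k < ℓ, ∀ i : Fin n, Q (k + 1) i = Q k i ∨ G.Adj (Q k i) (Q (k + 1) i))

/-- Closed neighborhood `N[X]` of a set of vertices. -/
def nclSet {V : Type*} (G : SimpleGraph V) (X : Set V) : Set V :=
  X ∪ {v | ∃ u ∈ X, G.Adj u v}

/-- Contraction of a vertex set `W` to a single new vertex (`Sum.inr ()`), which is
adjacent exactly to the vertices of `N(W) ∖ W`; everything else is unchanged. -/
def contractSet {V : Type*} (G : SimpleGraph V) (W : Set V) :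
    SimpleGraph ({v : V // v ∉ W} ⊕ Unit) where
  Adj x y :=
    match x, y with
    | Sum.inl u, Sum.inl v => G.Adj u.1 v.1
    | Sum.inl u, Sum.inr _ => ∃ w ∈ W, G.Adj u.1 w
    | Sum.inr _, Sum.inl v => ∃ w ∈ W, G.Adj v.1 w
    | Sum.inr _, Sum.inr _ => False
  symm := by
    refine ⟨?_⟩
    rintro (u | u) (v | v) h
    · exact h.symm
    · exact h
    · exact h
    · exact h
  loopless := by
    refine ⟨?_⟩
    rintro (u | u) h
    · exact G.loopless.irrefl u.1 h
    · exact h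

/-- The planets of the contracted galactic graph: the surviving copies of planets. -/
def contractPlanets {V : Type*} (P W : Set V) : Set ({v : V // v ∉ W} ⊕ Unit) :=
  {x | ∃ u : {v : V // v ∉ W}, u.1 ∈ P ∧ x = Sum.inl u}

/-- A subset of `V ∖ W` viewed inside the contracted vertex set. -/
def liftSet {V : Type*} (W X : Set V) : Set ({v : V // v ∉ W} ⊕ Unit) :=
  {x | ∃ u : {v : V // v ∉ W}, u.1 ∈ X ∧ x = Sum.inl u}

/-- The infinite grid graph on `ℤ × ℤ`: adjacency is unit `L1` distance. -/
def gridGraph : SimpleGraph (ℤ × ℤ) where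
  Adj p q := |p.1 - q.1| + |p.2 - q.2| = 1
  symm := by
    refine ⟨?_⟩
    intro p q h
    rw [abs_sub_comm q.1, abs_sub_comm q.2]
    exact h
  loopless := by
    refine ⟨?_⟩
    intro p h
    simp at h

namespace Relation

variable {α : Type*} {r : α → α → Prop}

theorem ReflTransGen.exists_indexed_path {a c : α} (h : ReflTransGen r a c) :
    ∃ (k : ℕ) (p : ℕ → α), p 0 = a ∧ p k = c ∧ ∀ j < k, r (p j) (p (j + 1)) := by
  induction h with
  | refl => exact ⟨0, fun _ => a, rfl, rfl, by simp⟩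
  | @tail c d _ hcd ih =>
    obtain ⟨k, p, h0, hk, hp⟩ := ih
    refine ⟨k + 1, fun j => if j ≤ k then p j else d, by simp [h0], by simp, fun j hj => ?_⟩
    rcases Nat.lt_or_eq_of_le (Nat.le_of_lt_succ hj) with hj | rfl
    · simpa [hj.le, Nat.succ_le_of_lt hj] using hp j hj
    · simpa [hk] using hcd

theorem exists_path_of_loop {p : ℕ → α} {k i j : ℕ} (hp : ∀ s < k, r (p s) (p (s + 1)))
    (hij : i < j) (hjk : j ≤ k) (hloop : p i = p j) :
    ∃ q : ℕ → α, q 0 = p 0 ∧ q (k - (j - i)) = p k ∧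
      ∀ s < k - (j - i), r (q s) (q (s + 1)) := by
  refine ⟨fun s => if s ≤ i then p s else p (s + (j - i)), by simp, ?_, fun s hs => ?_⟩
  · by_cases h : k - (j - i) ≤ i
    · simp only [h, if_true]
      rw [show k - (j - i) = i by omega, hloop, show j = k by omega]
    · simp only [h, if_false]
      rw [show k - (j - i) + (j - i) = k by omega]
  · by_cases hs₁ : s + 1 ≤ i
    · simpa [hs₁, show s ≤ i by omega] using hp s (by omega)
    by_cases hs₂ : s = i
    · subst hs₂
      simpa [hloop, show s + 1 + (j - s) = j + 1 by omega] using hp j (by omega)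
    · simpa [hs₁, show ¬ s ≤ i by omega, show s + 1 + (j - i) = s + (j - i) + 1 by omega]
        using hp (s + (j - i)) (by omega)

theorem exists_shortest_path {A B : Set α} (h : ∃ a ∈ A, ∃ c ∈ B, ReflTransGen r a c) :
    ∃ (k : ℕ) (p : ℕ → α), p 0 ∈ A ∧ p k ∈ B ∧ (∀ j < k, r (p j) (p (j + 1))) ∧
      Set.InjOn p (Set.Iic k) ∧ (∀ j ∈ Set.Ioc 0 k, p j ∉ A) ∧ ∀ j < k, p j ∉ B := by
  classical
  have hex : ∃ k, ∃ p : ℕ → α, p 0 ∈ A ∧ p k ∈ B ∧ ∀ j < k, r (p j) (p (j + 1)) := by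
    obtain ⟨a, ha, c, hc, hac⟩ := h
    obtain ⟨k, p, rfl, rfl, hp⟩ := hac.exists_indexed_path
    exact ⟨k, p, ha, hc, hp⟩
  obtain ⟨p, hA, hB, hp⟩ := Nat.find_spec hex
  have hmin : ∀ k < Nat.find hex, ¬ ∃ q : ℕ → α, q 0 ∈ A ∧ q k ∈ B ∧
      ∀ j < k, r (q j) (q (j + 1)) := fun k hk => Nat.find_min hex hk
  -- a repeated vertex, a later vertex in `A` or an earlier one in `B` gives a shorter path
  refine ⟨_, p, hA, hB, hp, ?_, fun j hj hjA => ?_, fun j hj hjB => ?_⟩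
  · intro i hi j hj hij
    by_contra hne
    wlog hlt : i < j generalizing i j
    · exact this hj hi hij.symm (Ne.symm hne) (by omega)
    obtain ⟨q, hq0, hqk, hq⟩ := exists_path_of_loop hp hlt hj hij
    exact hmin _ (by rw [Set.mem_Iic] at hj; omega) ⟨q, hq0 ▸ hA, hqk ▸ hB, hq⟩
  · refine hmin (Nat.find hex - j) (by grind) ⟨fun s => p (s + j), by simpa using hjA, ?_, ?_⟩
    · simpa [show Nat.find hex - j + j = Nat.find hex by grind] using hB
    · intro s hs
      simpa [Nat.add_right_comm s 1 j] using hp (s + j) (by omega)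
  · exact hmin j hj ⟨p, hA, hjB, fun s hs => hp s (by omega)⟩

end Relation

theorem Equiv.Perm.exists_shift_path {α : Type*} [DecidableEq α] {p : ℕ → α} {k : ℕ}
    (hp : Set.InjOn p (Set.Iic k)) :
    ∃ d : Equiv.Perm α, d (p 0) = p k ∧ (∀ j ∈ Set.Ioc 0 k, d (p j) = p (j - 1)) ∧
      ∀ i ∉ p '' Set.Iic k, d i = i := by
  set l := List.ofFn fun s : Fin (k + 1) => p (k - s)
  have hlen : l.length = k + 1 := List.length_ofFn
  have hget (s : ℕ) (hs : s < l.length) : l[s] = p (k - s) := List.getElem_ofFn ..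
  have hnd : l.Nodup := by
    refine List.nodup_ofFn.mpr fun s s' hss => Fin.ext ?_
    have := hp (Set.mem_Iic.mpr (Nat.sub_le k s)) (Set.mem_Iic.mpr (Nat.sub_le k s')) hss
    omega
  refine ⟨l.formPerm, ?_, fun j hj => ?_, fun i hi => List.formPerm_apply_of_notMem ?_⟩
  · have := List.formPerm_apply_getElem l hnd k (by omega)
    simpa [hget, hlen] using this
  · have := List.formPerm_apply_lt_getElem l hnd (k - j) (by grind)
    simpa [hget, show k - (k - j) = j by grind, show k - (k - j + 1) = j - 1 by grind] using this
  · simp only [l, List.mem_ofFn, not_exists] at hi ⊢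
    intro s hs
    exact hi ⟨k - s, Set.mem_Iic.mpr (Nat.sub_le k s), hs⟩

section Galactic

variable {V : Type*} (G : SimpleGraph V) (P : Set V)

def GalApart (x y : V) : Prop := x ∈ P → y ∈ P → x ≠ y ∧ ¬ G.Adj x y

variable {G P}

theorem GalApart.symm {x y : V} (h : GalApart G P x y) : GalApart G P y x :=
  fun hy hx => ⟨(h hx hy).1.symm, fun hyx => (h hx hy).2 hyx.symm⟩

theorem galApart_of_left_notMem {x y : V} (hx : x ∉ P) : GalApart G P x y :=
  fun hx' => absurd hx' hx

theorem galApart_of_right_notMem {x y : V} (hy : y ∉ P) : GalApart G P x y :=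
  fun _ hy' => absurd hy' hy

theorem not_galApart_iff {x y : V} :
    ¬ GalApart G P x y ↔ x ∈ P ∧ y ∈ P ∧ (x = y ∨ G.Adj x y) := by
  simp only [GalApart]
  tauto

theorem one_lt_edist_induce_iff {x y : V} (hx : x ∈ P) (hy : y ∈ P) :
    (1 : ℕ∞) < (G.induce P).edist ⟨x, hx⟩ ⟨y, hy⟩ ↔ x ≠ y ∧ ¬ G.Adj x y := by
  rw [← not_le, edist_le_one_iff_adj_or_eq, induce_adj, Subtype.mk.injEq]
  tauto

theorem galIndep_one_iff {n : ℕ} {c : Fin n → V} :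
    GalIndep G P 1 c ↔ ∀ i j, i ≠ j → GalApart G P (c i) (c j) := by
  simp only [GalIndep, GalApart, Nat.cast_one, one_lt_edist_induce_iff]

theorem GalIndep.comp_perm {r n : ℕ} {c : Fin n → V} (h : GalIndep G P r c)
    (σ : Equiv.Perm (Fin n)) : GalIndep G P r (c ∘ σ) :=
  fun i j hij => h (σ i) (σ j) (σ.injective.ne hij)

variable (G P) (b : V) {n : ℕ}

def IsMove (c c' : Fin n → V) : Prop := ∀ i, c' i = c i ∨ G.Adj (c i) (c' i)

def AltStep (c c' : Fin n → V) : Prop :=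
  IsMove G c c' ∧ GalIndep G P 1 c' ∧
    (Set.range c ∩ G.neighborSet b = ∅ ∨ Set.range c' ∩ G.neighborSet b = ∅)

theorem range_inter_neighborSet_eq_empty_iff {ι : Type*} {c : ι → V} :
    Set.range c ∩ G.neighborSet b = ∅ ↔ ∀ i, ¬ G.Adj b (c i) := by
  simp [Set.eq_empty_iff_forall_notMem]

open Classical in
noncomputable def park (S : Set (Fin n)) (c : Fin n → V) : Fin n → V :=
  fun i => if i ∈ S then b else c i

variable {G P b}

@[simp]
theorem park_empty (c : Fin n → V) : park b ∅ c = c := by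
  funext i
  simp [park]

theorem altStep_park (hb : b ∉ P) {S S' : Set (Fin n)} {c c' : Fin n → V}
    (hmove : ∀ i ∉ S, i ∉ S' → c' i = c i ∨ G.Adj (c i) (c' i))
    (hleave : ∀ i ∈ S, i ∉ S' → G.Adj b (c' i))
    (henter : ∀ i ∉ S, i ∈ S' → G.Adj b (c i))
    (hapart : ∀ i j, i ≠ j → i ∉ S' → j ∉ S' → GalApart G P (c' i) (c' j))
    (havoid : (∀ i ∉ S, ¬ G.Adj b (c i)) ∨ (∀ i ∉ S', ¬ G.Adj b (c' i))) :
    AltStep G P b (park b S c) (park b S' c') := by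
  simp only [AltStep, IsMove, galIndep_one_iff, range_inter_neighborSet_eq_empty_iff, park]
  refine ⟨fun i => ?_, fun i j hij => ?_, ?_⟩
  · split_ifs with hi' hi hi
    exacts [.inl rfl, .inr (henter i hi hi').symm, .inr (hleave i hi hi'), hmove i hi hi']
  · split_ifs with hi hj hj
    exacts [galApart_of_left_notMem hb, galApart_of_left_notMem hb,
      galApart_of_right_notMem hb, hapart i j hij hi hj]
  · refine havoid.imp (fun h i => ?_) (fun h i => ?_) <;> split_ifs with hi
    exacts [G.loopless.irrefl b, h i hi, G.loopless.irrefl b, h i hi]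

end Galactic

section Matching

open Relation

variable {V : Type*} (G : SimpleGraph V) (P : Set V) (b : V) {n : ℕ}

def agentsNear (c : Fin n → V) : Set (Fin n) := c ⁻¹' G.neighborSet b

def IsMoveVia (u t : Fin n → V) : Prop :=
  ∀ i ∉ agentsNear G b u ∩ agentsNear G b t, t i = u i ∨ G.Adj (u i) (t i)

/-- The target of `a` is within planet-distance `1` of the source of `c`, so `c` has to leave
before `a` arrives; agents with source and target in `N(b)` wait in `b` and block nobody. -/
def WaitsFor (u t : Fin n → V) (a c : Fin n) : Prop :=
  a ∉ agentsNear G b u ∩ agentsNear G b t ∧ c ∉ agentsNear G b u ∩ agentsNear G b t ∧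
    ¬ GalApart G P (t a) (u c)

def DeadlockFree (u t : Fin n → V) : Prop :=
  ∀ o ∈ agentsNear G b u \ agentsNear G b t, ∀ f ∈ agentsNear G b t \ agentsNear G b u,
    ¬ ReflTransGen (WaitsFor G P b u t) o f

variable {G P b}

@[simp]
theorem mem_agentsNear {c : Fin n → V} {i : Fin n} : i ∈ agentsNear G b c ↔ G.Adj b (c i) :=
  Iff.rfl

theorem IsMoveVia.exists_perm_symmDiff_ssubset {u t : Fin n → V} (ht : IsMoveVia G b u t)
    {k : ℕ} {p : ℕ → Fin n} (h0 : p 0 ∈ agentsNear G b u \ agentsNear G b t)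
    (hk : p k ∈ agentsNear G b t \ agentsNear G b u)
    (hp : ∀ j < k, WaitsFor G P b u t (p j) (p (j + 1))) (hinj : Set.InjOn p (Set.Iic k))
    (hsrc : ∀ j ∈ Set.Ioc 0 k, p j ∉ agentsNear G b u \ agentsNear G b t)
    (htgt : ∀ j < k, p j ∉ agentsNear G b t \ agentsNear G b u) :
    ∃ d : Equiv.Perm (Fin n), IsMoveVia G b u (t ∘ d) ∧
      symmDiff (agentsNear G b u) (agentsNear G b (t ∘ d)) ⊂
        symmDiff (agentsNear G b u) (agentsNear G b t) := by
  obtain ⟨d, hd0, hdp, hdout⟩ := Equiv.Perm.exists_shift_path hinj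
  have hwait (j : ℕ) (hj : j ∈ Set.Ioc 0 k) : WaitsFor G P b u t (p (j - 1)) (p j) := by
    simpa [show j - 1 + 1 = j by grind] using hp (j - 1) (by grind)
  have hsrc' (j : ℕ) (hj : j ∈ Set.Ioc 0 k) : p j ∉ agentsNear G b u := fun hU =>
    hsrc j hj ⟨hU, fun hT => (hwait j hj).2.1 ⟨hU, hT⟩⟩
  have htgt' (j : ℕ) (hj : j < k) : p j ∉ agentsNear G b t := fun hT =>
    htgt j hj ⟨hT, fun hU => (hp j hj).1 ⟨hU, hT⟩⟩
  have hpath (i : Fin n) : i ∉ p '' Set.Iic k ∨ i = p 0 ∨ ∃ j ∈ Set.Ioc 0 k, i = p j := by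
    by_cases hi : i ∈ p '' Set.Iic k
    · obtain ⟨j, hj, rfl⟩ := hi
      rcases Nat.eq_zero_or_pos j with rfl | hj0
      exacts [.inr (.inl rfl), .inr (.inr ⟨j, ⟨hj0, hj⟩, rfl⟩)]
    · exact .inl hi
  refine ⟨d, fun i hi => ?_, (Set.ssubset_iff_of_subset fun i hi => ?_).mpr ⟨p 0, ?_, ?_⟩⟩
  · rcases hpath i with hoff | rfl | ⟨j, hj, rfl⟩
    · have hti : (t ∘ d) i = t i := congrArg t (hdout i hoff)
      simp only [Set.mem_inter_iff, mem_agentsNear, hti] at hi ⊢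
      exact ht i (by simpa using hi)
    · exact absurd ⟨h0.1, by simpa [hd0] using hk.1⟩ hi
    · obtain ⟨-, -, hadj⟩ := not_galApart_iff.mp (hwait j hj).2.2
      simpa [hdp j hj] using hadj.imp id fun h => h.symm
  · rcases hpath i with hoff | rfl | ⟨j, hj, rfl⟩
    · simpa [Set.mem_symmDiff, hdout i hoff] using hi
    · simp [Set.mem_symmDiff, hd0] at hi
      tauto
    · have hU := hsrc' j hj
      have hT := htgt' (j - 1) (by grind)
      simp only [Set.mem_symmDiff, mem_agentsNear, Function.comp_apply, hdp j hj] at hi hU hT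
      tauto
  · exact .inl h0
  · simpa [Set.mem_symmDiff, hd0] using ⟨fun _ => hk.1, fun _ => h0.1⟩

end Matching

section Plan

open Relation

variable {V : Type*} {G : SimpleGraph V} {P : Set V} {b : V} {n : ℕ}

theorem IsMove.isMoveVia {u t : Fin n → V} (h : IsMove G u t) : IsMoveVia G b u t :=
  fun i _ => h i

theorem IsMove.exists_perm_isMoveVia_deadlockFree {u x : Fin n → V} (hx : IsMove G u x) :
    ∃ σ : Equiv.Perm (Fin n), IsMoveVia G b u (x ∘ σ) ∧ DeadlockFree G P b u (x ∘ σ) := by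
  classical
  obtain ⟨σ, hσ, hmin⟩ := Finset.exists_min_image
    ({σ : Equiv.Perm (Fin n) | IsMoveVia G b u (x ∘ σ)} : Finset _)
    (fun σ => (symmDiff (agentsNear G b u) (agentsNear G b (x ∘ σ))).ncard)
    ⟨1, by simpa using hx.isMoveVia⟩
  rw [Finset.mem_filter_univ] at hσ
  refine ⟨σ, hσ, fun o ho f hf hof => ?_⟩
  obtain ⟨k, p, h0, hk, hp, hinj, hsrc, htgt⟩ := exists_shortest_path ⟨o, ho, f, hf, hof⟩
  obtain ⟨d, hd, hlt⟩ := hσ.exists_perm_symmDiff_ssubset h0 hk hp hinj hsrc htgt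
  exact (Set.ncard_lt_ncard hlt).not_ge (hmin (σ * d) ((Finset.mem_filter_univ _).mpr hd))

theorem DeadlockFree.exists_halfway {u t : Fin n → V} (hfree : DeadlockFree G P b u t)
    (hu : ∀ i j, i ≠ j → GalApart G P (u i) (u j)) (ht : ∀ i j, i ≠ j → GalApart G P (t i) (t j))
    (hvia : IsMoveVia G b u t) :
    ∃ m : Fin n → V,
      (∀ i ∉ agentsNear G b u ∩ agentsNear G b t, m i = u i ∨ G.Adj (u i) (m i)) ∧
      (∀ i ∉ agentsNear G b u ∩ agentsNear G b t, t i = m i ∨ G.Adj (m i) (t i)) ∧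
      (∀ i j, i ≠ j → i ∉ agentsNear G b u ∩ agentsNear G b t →
        j ∉ agentsNear G b u ∩ agentsNear G b t → GalApart G P (m i) (m j)) ∧
      ∀ i ∉ agentsNear G b u ∩ agentsNear G b t, ¬ G.Adj b (m i) := by
  classical
  set U := agentsNear G b u
  set T := agentsNear G b t
  set D : Set (Fin n) := {c | ∃ o ∈ U \ T, ReflTransGen (WaitsFor G P b u t) o c}
  have hleaving : ∀ i ∈ U, i ∉ T → i ∈ D := fun i hU hT => ⟨i, ⟨hU, hT⟩, .refl⟩
  have hentering : ∀ i ∈ D, i ∈ T → i ∈ U := fun i ⟨o, ho, hoi⟩ hT =>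
    by_contra fun hU => hfree o ho i ⟨hT, hU⟩ hoi
  have hcross : ∀ i ∈ D, ∀ j ∉ D, i ∉ U ∩ T → j ∉ U ∩ T → GalApart G P (t i) (u j) :=
    fun i ⟨o, ho, hoi⟩ j hj hi hj' => by_contra fun h => hj ⟨o, ho, hoi.tail ⟨hi, hj', h⟩⟩
  refine ⟨fun i => if i ∈ D then t i else u i, fun i hi => ?_, fun i hi => ?_,
    fun i j hij hi hj => ?_, fun i hi => ?_⟩
  · by_cases hD : i ∈ D
    · simpa [hD] using hvia i hi
    · simp [hD]
  · by_cases hD : i ∈ D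
    · simp [hD]
    · simpa [hD] using hvia i hi
  · by_cases hDi : i ∈ D <;> by_cases hDj : j ∈ D <;> simp only [hDi, hDj, if_true, if_false]
    exacts [ht i j hij, hcross i hDi j hDj hi hj, (hcross j hDj i hDi hj hi).symm, hu i j hij]
  · by_cases hD : i ∈ D <;> simp only [hD, if_true, if_false]
    · exact fun hT => hi ⟨hentering i hD hT, hT⟩
    · exact fun hU => hD (hleaving i hU fun hT => hi ⟨hU, hT⟩)

theorem reflTransGen_altStep_of_isMoveVia (hb : b ∉ P) {u t : Fin n → V}
    (hu : GalIndep G P 1 u) (ht : GalIndep G P 1 t) (hvia : IsMoveVia G b u t)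
    (hfree : DeadlockFree G P b u t) : ReflTransGen (AltStep G P b) u t := by
  set U := agentsNear G b u
  set T := agentsNear G b t
  rw [galIndep_one_iff] at hu ht
  obtain ⟨m, hm_move, hm_move', hm_apart, hm_avoid⟩ := hfree.exists_halfway hu ht hvia
  have h₁ : AltStep G P b (park b ∅ u) (park b U u) :=
    altStep_park hb (fun _ _ _ => .inl rfl) (fun _ hi => absurd hi (Set.notMem_empty _))
      (fun _ _ hi => hi) (fun i j hij _ _ => hu i j hij) (.inr fun _ hi => hi)
  have h₂ : AltStep G P b (park b U u) (park b (U ∩ T) u) :=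
    altStep_park hb (fun _ _ _ => .inl rfl) (fun _ hi _ => hi) (fun _ hi hi' => absurd hi'.1 hi)
      (fun i j hij _ _ => hu i j hij) (.inl fun _ hi => hi)
  have h₃ : AltStep G P b (park b (U ∩ T) u) (park b (U ∩ T) m) :=
    altStep_park hb (fun i hi _ => hm_move i hi) (fun _ hi hi' => absurd hi hi')
      (fun _ hi hi' => absurd hi' hi) hm_apart (.inr hm_avoid)
  have h₄ : AltStep G P b (park b (U ∩ T) m) (park b (U ∩ T) t) :=
    altStep_park hb (fun i hi _ => hm_move' i hi) (fun _ hi hi' => absurd hi hi')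
      (fun _ hi hi' => absurd hi' hi) (fun i j hij _ _ => ht i j hij) (.inl hm_avoid)
  have h₅ : AltStep G P b (park b (U ∩ T) t) (park b T t) :=
    altStep_park hb (fun _ _ _ => .inl rfl) (fun _ hi hi' => absurd hi.2 hi') (fun _ _ hi => hi)
      (fun i j hij _ _ => ht i j hij) (.inr fun _ hi => hi)
  have h₆ : AltStep G P b (park b T t) (park b ∅ t) :=
    altStep_park hb (fun _ _ _ => .inl rfl) (fun _ hi _ => hi)
      (fun _ _ hi => absurd hi (Set.notMem_empty _)) (fun i j hij _ _ => ht i j hij)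
      (.inl fun _ hi => hi)
  simpa using (((((ReflTransGen.single h₁).tail h₂).tail h₃).tail h₄).tail h₅).tail h₆

theorem IsMove.exists_perm_reflTransGen_altStep (hb : b ∉ P) {u x : Fin n → V}
    (hx : IsMove G u x) (hu : GalIndep G P 1 u) (hx' : GalIndep G P 1 x) :
    ∃ σ : Equiv.Perm (Fin n), ReflTransGen (AltStep G P b) u (x ∘ σ) := by
  obtain ⟨σ, hvia, hfree⟩ := hx.exists_perm_isMoveVia_deadlockFree (P := P) (b := b)
  exact ⟨σ, reflTransGen_altStep_of_isMoveVia hb hu (hx'.comp_perm σ) hvia hfree⟩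

theorem exists_perm_reflTransGen_altStep_of_plan (hb : b ∉ P) (Q : ℕ → Fin n → V) (ℓ : ℕ)
    (hind : ∀ k ≤ ℓ, GalIndep G P 1 (Q k)) (hmove : ∀ k < ℓ, IsMove G (Q k) (Q (k + 1))) :
    ∃ τ : Equiv.Perm (Fin n), ReflTransGen (AltStep G P b) (Q 0) (Q ℓ ∘ τ) := by
  induction ℓ with
  | zero => exact ⟨1, by simpa using .refl⟩
  | succ m ih =>
    obtain ⟨τ, hτ⟩ := ih (fun k hk => hind k (by omega)) (fun k hk => hmove k (by omega))
    obtain ⟨σ, hσ⟩ := IsMove.exists_perm_reflTransGen_altStep hb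
      (fun i => hmove m m.lt_succ_self (τ i)) ((hind m m.le_succ).comp_perm τ)
      ((hind (m + 1) le_rfl).comp_perm τ)
    exact ⟨τ * σ, hτ.trans hσ⟩

end Plan

theorem exists_plan_nbhd_alternating_general {V : Type*} (G : SimpleGraph V)
    (P : Set V) (b : V) (hb : b ∉ P)
    (n : ℕ) (S T : Set V)
    (hplan : GalPlan G P 1 n S T) :
    ∃ (ℓ : ℕ) (Q : ℕ → Fin n → V),
      (Set.range (Q 0) = S ∧ Set.range (Q ℓ) = T ∧
        (∀ k ≤ ℓ, GalIndep G P 1 (Q k)) ∧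
        (∀ k < ℓ, ∀ i : Fin n, Q (k + 1) i = Q k i ∨ G.Adj (Q k i) (Q (k + 1) i))) ∧
      (∀ t < ℓ, Set.range (Q t) ∩ G.neighborSet b = ∅ ∨
        Set.range (Q (t + 1)) ∩ G.neighborSet b = ∅) := by
  obtain ⟨ℓ, Q, hQ0, hQℓ, hind, hmove⟩ := hplan
  obtain ⟨τ, hτ⟩ := exists_perm_reflTransGen_altStep_of_plan hb Q ℓ hind hmove
  obtain ⟨k, R, hR0, hRk, hR⟩ := hτ.exists_indexed_path
  refine ⟨k, R, ⟨hR0 ▸ hQ0, ?_, ?_, fun j hj => (hR j hj).1⟩, fun j hj => (hR j hj).2.2⟩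
  · rw [hRk, τ.surjective.range_comp]
    exact hQℓ
  · rintro (_ | j) hj
    exacts [hR0 ▸ hind 0 ℓ.zero_le, (hR j hj).2.1]

/-- any feasible instance of Galactic 1IUMAPF with a black hole `b` admits a
plan in which no two consecutive configurations both place an agent in the open
neighborhood `N(b)`. -/
theorem exists_plan_nbhd_alternating {V : Type*} [Fintype V] (G : SimpleGraph V)
    (P : Set V) (b : V) (hb : b ∉ P)
    (n : ℕ) (S T : Set V) (hSP : S ⊆ P) (hTP : T ⊆ P)
    (hS : S.ncard = n) (hT : T.ncard = n)
    (hbh : nclSet G (S ∪ T) ⊆ P)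
    (hplan : GalPlan G P 1 n S T) :
    ∃ (ℓ : ℕ) (Q : ℕ → Fin n → V),
      (Set.range (Q 0) = S ∧ Set.range (Q ℓ) = T ∧
        (∀ k ≤ ℓ, GalIndep G P 1 (Q k)) ∧
        (∀ k < ℓ, ∀ i : Fin n, Q (k + 1) i = Q k i ∨ G.Adj (Q k i) (Q (k + 1) i))) ∧
      (∀ t < ℓ, Set.range (Q t) ∩ G.neighborSet b = ∅ ∨
        Set.range (Q (t + 1)) ∩ G.neighborSet b = ∅) :=
  exists_plan_nbhd_alternating_general G P b hb n S T hplan
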